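/- Let Y be a finite type and let W : Fin 2 → Y → ℝ be a binary-input channel: W u y ≥ 0 for all u, y, and Σ_{y ∈ Y} W u y = 1 for each u ∈ Fin 2. Then the Bhattacharyya parameter satisfies 0 ≤ Z(W) ≤ 1, where Z(W) = Σ_{y ∈ Y} √(W 0 y · W 1 y). Consequently, the plus-channel satisfies Z(W⁺) = Z(W)² ≤ Z(W), so polarization makes the plus-channel at least as reliable as the original channel. -/

import Mathlib

/-- The Bhattacharyya parameter of a binary-input channel kernel on a finite
output alphabet. -/
noncomputable def bhattacharyya {Y : Type*} [Fintype Y] (W : Fin 2 → Y → ℝ) : ℝ :=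
  ∑ y : Y, Real.sqrt (W 0 y * W 1 y)

/-- Arıkan's plus-channel `W⁺ = W ⊛ W`, with output alphabet `Y × Y × Fin 2` and
`W⁺ u₂ (y₁, y₂, u₁) = (1/2) ⬝ W (u₁ + u₂) y₁ ⬝ W u₂ y₂` (input addition mod 2). -/
noncomputable def plusChannel {Y : Type*} (W : Fin 2 → Y → ℝ) : Fin 2 → Y × Y × Fin 2 → ℝ :=
  fun u₂ p => (1 / 2) * W (p.2.2 + u₂) p.1 * W u₂ p.2.1

/-!
Writing `√(W 0 y * W 1 y) = √(W 0 y) * √(W 1 y)`, the bound `Z(W) ≤ 1` is Cauchy–Schwarz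
against the two normalised rows of `W`. For the plus-channel, the product
`W⁺ 0 (y₁, y₂, u₁) * W⁺ 1 (y₁, y₂, u₁)` equals `(1/4) (W 0 y₁ W 1 y₁) (W 0 y₂ W 1 y₂)`
whatever `u₁` is, so summing over `u₁` cancels the `1/2` and the sum over `(y₁, y₂)` factors
as `Z(W)²`; then `Z² ≤ Z` on `[0, 1]`.
-/

section

variable {Y : Type*} [Fintype Y] (W : Fin 2 → Y → ℝ)

theorem bhattacharyya_nonneg : 0 ≤ bhattacharyya W :=
  Finset.sum_nonneg fun _ _ => Real.sqrt_nonneg _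

variable {W}

theorem bhattacharyya_le_sqrt_mul_sqrt (hW : ∀ u y, 0 ≤ W u y) :
    bhattacharyya W ≤ √(∑ y, W 0 y) * √(∑ y, W 1 y) := by
  simp only [bhattacharyya, Real.sqrt_mul (hW 0 _)]
  exact Real.sum_sqrt_mul_sqrt_le _ (hW 0) (hW 1)

theorem bhattacharyya_le_one (hW : ∀ u y, 0 ≤ W u y) (hW1 : ∀ u : Fin 2, ∑ y : Y, W u y = 1) :
    bhattacharyya W ≤ 1 := by
  simpa [hW1] using bhattacharyya_le_sqrt_mul_sqrt hW

end

theorem mul_apply_add_one_eq {Y : Type*} (W : Fin 2 → Y → ℝ) (u : Fin 2) (y : Y) :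
    W u y * W (u + 1) y = W 0 y * W 1 y := by
  fin_cases u
  · simp
  · simp [mul_comm]

theorem sqrt_plusChannel_mul {Y : Type*} {W : Fin 2 → Y → ℝ} (hW : ∀ u y, 0 ≤ W u y)
    (y₁ y₂ : Y) (u₁ : Fin 2) :
    √(plusChannel W 0 (y₁, y₂, u₁) * plusChannel W 1 (y₁, y₂, u₁)) =
      √(W 0 y₁ * W 1 y₁) * √(W 0 y₂ * W 1 y₂) / 2 := by
  have hprod : plusChannel W 0 (y₁, y₂, u₁) * plusChannel W 1 (y₁, y₂, u₁) =
      (W 0 y₁ * W 1 y₁) * (W 0 y₂ * W 1 y₂) / 2 ^ 2 := by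
    simp only [plusChannel, add_zero, ← mul_apply_add_one_eq W u₁ y₁]
    ring
  have hnonneg : 0 ≤ W 0 y₁ * W 1 y₁ := mul_nonneg (hW 0 y₁) (hW 1 y₁)
  rw [hprod, Real.sqrt_div' _ (by positivity), Real.sqrt_mul hnonneg,
    Real.sqrt_sq zero_le_two]

theorem bhattacharyya_plusChannel {Y : Type*} [Fintype Y] {W : Fin 2 → Y → ℝ}
    (hW : ∀ u y, 0 ≤ W u y) : bhattacharyya (plusChannel W) = bhattacharyya W ^ 2 := by
  simp only [bhattacharyya, Fintype.sum_prod_type, sqrt_plusChannel_mul hW, Fin.sum_univ_two,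
    add_halves, sq, Finset.sum_mul_sum]

/-- For a binary-input channel, `0 ≤ Z(W) ≤ 1`; consequently
`Z(W⁺) = Z(W)² ≤ Z(W)`. -/
theorem bhattacharyya_mem_unit_interval {Y : Type*} [Fintype Y] (W : Fin 2 → Y → ℝ)
    (hW : ∀ u y, 0 ≤ W u y) (hW1 : ∀ u : Fin 2, ∑ y : Y, W u y = 1) :
    0 ≤ bhattacharyya W ∧ bhattacharyya W ≤ 1 ∧
    bhattacharyya (plusChannel W) = (bhattacharyya W) ^ 2 ∧
    bhattacharyya (plusChannel W) ≤ bhattacharyya W := by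
  have hZ0 := bhattacharyya_nonneg W
  have hZ1 := bhattacharyya_le_one hW hW1
  have hplus := bhattacharyya_plusChannel hW
  exact ⟨hZ0, hZ1, hplus, hplus ▸ sq_le hZ0 hZ1⟩
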